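/- Let S be a finite set, let ≈ be an equivalence relation on S, and for each s ∈ S let [l(s), u(s)] ⊆ [0,1] be a closed interval such that the set {μ ∈ Disc(S) : μ(s) ∈ [l(s), u(s)] for all s} is nonempty. Then for every probability distribution ν on the set S/≈ of equivalence classes, the following are equivalent: (i) ν(C) ∈ [Σ_{s∈C} l(s), Σ_{s∈C} u(s)] for every class C ∈ S/≈; (ii) there exists μ ∈ Disc(S) with μ(s) ∈ [l(s), u(s)] for all s ∈ S and Σ_{s∈C} μ(s) = ν(C) for every class C ∈ S/≈. -/

import Mathlib

open scoped Classical

def IsDist {X : Type} [Fintype X] (μ : X → ℝ) : Prop :=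
  (∀ x, 0 ≤ μ x) ∧ (∑ x, μ x) = 1

noncomputable def classMass {S : Type} [Fintype S] (R : S → S → Prop)
    (μ : S → ℝ) (c : S) : ℝ :=
  ∑ s', if R c s' then μ s' else 0

def ClassDist {S : Type} [Fintype S] (R : S → S → Prop) (ν : S → ℝ) : Prop :=
  (∀ s, 0 ≤ ν s) ∧ (∀ s t : S, R s t → ν s = ν t) ∧
  (∑ s, ν s / ((Finset.univ.filter fun x => R s x).card : ℝ)) = 1

/-! On each class `C` the target mass `ν C` lies between `∑_{s∈C} l s` and `∑_{s∈C} u s`, so it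
is reached by moving every point of `C` the same fraction `θ_C` of the way from `l s` to `u s`.
The resulting `μ` is a distribution: it is nonnegative because `l` is, and its total mass is
that of `ν`, since summing `ν C / |C|` over all points counts each class once. -/

lemma add_mul_sub_mem_Icc {a b θ : ℝ} (hab : a ≤ b) (hθ : θ ∈ Set.Icc (0 : ℝ) 1) :
    a + θ * (b - a) ∈ Set.Icc a b := by
  obtain ⟨hθ0, hθ1⟩ := hθ
  constructor <;> nlinarith

lemma div_sub_mem_Icc {a b x : ℝ} (hx : x ∈ Set.Icc a b) :
    (x - a) / (b - a) ∈ Set.Icc (0 : ℝ) 1 := by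
  obtain ⟨hax, hxb⟩ := hx
  exact ⟨div_nonneg (by linarith) (by linarith), div_le_one_of_le₀ (by linarith) (by linarith)⟩

-- When `b = a` the quotient is the junk value `0`, which is still right because then `x = a`.
lemma add_div_sub_mul_sub {a b x : ℝ} (hx : x ∈ Set.Icc a b) :
    a + (x - a) / (b - a) * (b - a) = x := by
  obtain ⟨hax, hxb⟩ := hx
  rw [div_mul_cancel_of_imp fun h => by linarith]
  ring

section classMass

variable {S : Type} [Fintype S] {R : S → S → Prop}

lemma classMass_eq_sum_filter (R : S → S → Prop) (f : S → ℝ) (c : S) :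
    classMass R f c = ∑ s ∈ Finset.univ.filter (R c), f s :=
  (Finset.sum_filter _ _).symm

lemma classMass_mono (R : S → S → Prop) {f g : S → ℝ} (h : ∀ s, f s ≤ g s) (c : S) :
    classMass R f c ≤ classMass R g c := by
  simp only [classMass_eq_sum_filter]
  exact Finset.sum_le_sum fun s _ => h s

lemma filter_rel_eq_of_rel (hR : Equivalence R) {c c' : S} (h : R c c') :
    Finset.univ.filter (R c) = Finset.univ.filter (R c') := by
  ext s
  simpa only [Finset.mem_filter, Finset.mem_univ, true_and] using
    ⟨hR.trans (hR.symm h), hR.trans h⟩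

lemma classMass_congr (hR : Equivalence R) (f : S → ℝ) {c c' : S} (h : R c c') :
    classMass R f c = classMass R f c' := by
  simp only [classMass_eq_sum_filter, filter_rel_eq_of_rel hR h]

lemma classMass_add_mul_sub (l u θ : S → ℝ) {c : S}
    (hθ : ∀ s, R c s → θ s = θ c) :
    classMass R (fun s => l s + θ s * (u s - l s)) c =
      classMass R l c + θ c * (classMass R u c - classMass R l c) := by
  simp only [classMass_eq_sum_filter]
  rw [Finset.sum_congr rfl fun s hs => by rw [hθ s (Finset.mem_filter.mp hs).2],
    Finset.sum_add_distrib, ← Finset.mul_sum, Finset.sum_sub_distrib]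

lemma sum_classMass_div_card (hR : Equivalence R) (f : S → ℝ) :
    ∑ c, classMass R f c / ((Finset.univ.filter fun x => R c x).card : ℝ) = ∑ s, f s := by
  set n : S → ℝ := fun c => ((Finset.univ.filter fun x => R c x).card : ℝ)
  have hn_pos : ∀ s, 0 < n s := fun s =>
    Nat.cast_pos.mpr (Finset.card_pos.mpr ⟨s, by simp [hR.refl s]⟩)
  have hn_symm : ∀ s, ((Finset.univ.filter fun c => R c s).card : ℝ) = n s := fun s => by
    simp only [n, Finset.filter_congr fun c _ => (⟨hR.symm, hR.symm⟩ : R c s ↔ R s c)]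
  calc ∑ c, classMass R f c / n c
      = ∑ c, ∑ s, if R c s then f s / n s else 0 := by
        refine Finset.sum_congr rfl fun c _ => ?_
        rw [classMass, Finset.sum_div]
        refine Finset.sum_congr rfl fun s _ => ?_
        split_ifs with h
        · simp only [n, filter_rel_eq_of_rel hR h]
        · exact zero_div _
    _ = ∑ s, ∑ c, if R c s then f s / n s else 0 := Finset.sum_comm
    _ = ∑ s, f s := by
        refine Finset.sum_congr rfl fun s _ => ?_
        rw [← Finset.sum_filter, Finset.sum_const, nsmul_eq_mul, hn_symm]
        exact mul_div_cancel₀ _ (hn_pos s).ne'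

lemma isDist_of_classMass_eq (hR : Equivalence R) {μ ν : S → ℝ} (hμ : ∀ s, 0 ≤ μ s)
    (hν : ClassDist R ν) (hμν : ∀ c, classMass R μ c = ν c) : IsDist μ := by
  refine ⟨hμ, ?_⟩
  rw [← sum_classMass_div_card hR, ← hν.2.2]
  simp only [hμν]

lemma exists_classMass_eq (hR : Equivalence R) {l u ν : S → ℝ} (hlu : ∀ s, l s ≤ u s)
    (hν : ∀ s t, R s t → ν s = ν t)
    (hbounds : ∀ c, ν c ∈ Set.Icc (classMass R l c) (classMass R u c)) :
    ∃ μ : S → ℝ, (∀ s, μ s ∈ Set.Icc (l s) (u s)) ∧ ∀ c, classMass R μ c = ν c := by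
  set θ : S → ℝ := fun c => (ν c - classMass R l c) / (classMass R u c - classMass R l c)
  have hθ : ∀ c s, R c s → θ s = θ c := fun c s h => by
    simp only [θ, hν c s h, classMass_congr hR l h, classMass_congr hR u h]
  refine ⟨fun s => l s + θ s * (u s - l s),
    fun s => add_mul_sub_mem_Icc (hlu s) (div_sub_mem_Icc (hbounds s)), fun c => ?_⟩
  rw [classMass_add_mul_sub l u θ (hθ c)]
  exact add_div_sub_mul_sub (hbounds c)

end classMass

theorem stmt11_general {S : Type} [Fintype S] (R : S → S → Prop) (hR : Equivalence R)
    (l u : S → ℝ) (hl : ∀ s, 0 ≤ l s) (hlu : ∀ s, l s ≤ u s)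
    (ν : S → ℝ) (hν : ClassDist R ν) :
    (∀ c : S, ν c ∈ Set.Icc (classMass R l c) (classMass R u c)) ↔
      ∃ μ : S → ℝ, IsDist μ ∧ (∀ s, μ s ∈ Set.Icc (l s) (u s)) ∧
        ∀ c : S, classMass R μ c = ν c := by
  constructor
  · intro hbounds
    obtain ⟨μ, hμ, hμν⟩ := exists_classMass_eq hR hlu hν.2.1 hbounds
    exact ⟨μ, isDist_of_classMass_eq hR (fun s => (hl s).trans (hμ s).1) hν hμν, hμ, hμν⟩
  · rintro ⟨μ, -, hμ, hμν⟩ c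
    rw [← hμν c]
    exact ⟨classMass_mono R (fun s => (hμ s).1) c, classMass_mono R (fun s => (hμ s).2) c⟩

theorem stmt11 {S : Type} [Fintype S] (R : S → S → Prop) (hR : Equivalence R)
    (l u : S → ℝ) (hl : ∀ s, 0 ≤ l s) (hlu : ∀ s, l s ≤ u s) (hu : ∀ s, u s ≤ 1)
    (hne : ∃ μ : S → ℝ, IsDist μ ∧ ∀ s, μ s ∈ Set.Icc (l s) (u s))
    (ν : S → ℝ) (hν : ClassDist R ν) :
    (∀ c : S, ν c ∈ Set.Icc (classMass R l c) (classMass R u c)) ↔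
      ∃ μ : S → ℝ, IsDist μ ∧ (∀ s, μ s ∈ Set.Icc (l s) (u s)) ∧
        ∀ c : S, classMass R μ c = ν c :=
  stmt11_general R hR l u hl hlu ν hν
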